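/- arXiv:2509.01151 — 4 statements merged into one kernel-verified Lean document; each statement's English description precedes it below -/
import Mathlib

section
/- Let {aₙ}ₙ≥1 be a nonnegative real sequence for which there exists a subsequence {a_{n_j}} with a_{n_j} < a_{n_j + 1} for all j ≥ 1. For n ≥ n₀ define ν(n) = max{k ∈ ℕ : n₀ ≤ k ≤ n, a_k < a_{k+1}}. Then ν is nondecreasing, ν(n) → ∞ as n → ∞, and for all n ≥ n₀ one has a_{ν(n)} ≤ a_{ν(n)+1} and aₙ ≤ a_{ν(n)+1}. -/
/-!
`ν n` is the last ascent `a k < a (k + 1)` in `[n₀, n]`. Enlarging `n` only enlarges the set of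
candidates, so `ν` is monotone, and it passes every ascent `φ j` of the subsequence, so it is
unbounded. Past `ν n` there is no ascent up to `n`, so `a` is nonincreasing on `[ν n + 1, n]`,
which gives `a n ≤ a (ν n + 1)`.
-/

open Filter

/-- Junk value `0` when no `m ∈ [n₀, n]` satisfies `P`. -/
noncomputable def Nat.lastBetween (P : ℕ → Prop) (n₀ n : ℕ) : ℕ :=
  sSup {m | n₀ ≤ m ∧ m ≤ n ∧ P m}

namespace Nat.lastBetween

variable {P : ℕ → Prop} {n₀ m n : ℕ}

theorem bddAbove : BddAbove {m | n₀ ≤ m ∧ m ≤ n ∧ P m} :=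
  ⟨n, fun _ hm => hm.2.1⟩

theorem mem (h : ∃ m, n₀ ≤ m ∧ m ≤ n ∧ P m) :
    n₀ ≤ lastBetween P n₀ n ∧ lastBetween P n₀ n ≤ n ∧ P (lastBetween P n₀ n) :=
  Nat.sSup_mem h bddAbove

theorem le_of_mem (hm : n₀ ≤ m) (hmn : m ≤ n) (hP : P m) : m ≤ lastBetween P n₀ n :=
  le_csSup bddAbove ⟨hm, hmn, hP⟩

theorem mono (h : ∃ k, n₀ ≤ k ∧ k ≤ m ∧ P k) (hmn : m ≤ n) :
    lastBetween P n₀ m ≤ lastBetween P n₀ n :=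
  let ⟨h₀, hm, hP⟩ := mem h
  le_of_mem h₀ (hm.trans hmn) hP

theorem not_of_lt (h : ∃ m, n₀ ≤ m ∧ m ≤ n ∧ P m) {k : ℕ} (hk : lastBetween P n₀ n < k)
    (hkn : k ≤ n) : ¬ P k := fun hP =>
  hk.not_ge (le_of_mem ((mem h).1.trans hk.le) hkn hP)

theorem tendsto_atTop (hP : ∀ b, ∃ m, b ≤ m ∧ P m) :
    Tendsto (lastBetween P n₀) atTop atTop := by
  refine tendsto_atTop_atTop.2 fun b => ?_
  obtain ⟨m, hm, hPm⟩ := hP (max b n₀)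
  exact ⟨m, fun n hmn => (le_of_max_le_left hm).trans
    (le_of_mem (le_of_max_le_right hm) hmn hPm)⟩

end Nat.lastBetween

theorem le_of_forall_not_lt_succ {α : Type*} [LinearOrder α] {a : ℕ → α} {i j : ℕ}
    (hij : i ≤ j) (h : ∀ k, i ≤ k → k < j → ¬ a k < a (k + 1)) : a j ≤ a i :=
  antitoneOn_of_add_one_le Set.ordConnected_Icc
    (fun k _ hk hk₁ => not_lt.1 (h k hk.1 (Nat.lt_of_succ_le hk₁.2)))
    ⟨le_rfl, hij⟩ ⟨hij, le_rfl⟩ hij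

theorem mainge_lemma_general (a : ℕ → ℝ)
    (φ : ℕ → ℕ) (hφ : StrictMono φ) (hsub : ∀ j, a (φ j) < a (φ j + 1))
    (n₀ : ℕ)
    (hne : ∀ n, n₀ ≤ n → ∃ m, n₀ ≤ m ∧ m ≤ n ∧ a m < a (m + 1))
    (ν : ℕ → ℕ)
    (hν : ∀ n, ν n = sSup {m | n₀ ≤ m ∧ m ≤ n ∧ a m < a (m + 1)}) :
    (∀ m n, n₀ ≤ m → m ≤ n → ν m ≤ ν n) ∧
      Filter.Tendsto ν Filter.atTop Filter.atTop ∧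
      (∀ n, n₀ ≤ n → a (ν n) ≤ a (ν n + 1) ∧ a n ≤ a (ν n + 1)) := by
  obtain rfl : ν = Nat.lastBetween (fun m => a m < a (m + 1)) n₀ := funext hν
  refine ⟨fun m n hm hmn => Nat.lastBetween.mono (hne m hm) hmn,
    Nat.lastBetween.tendsto_atTop fun b => ⟨φ b, hφ.le_apply, hsub b⟩, fun n hn => ?_⟩
  obtain ⟨-, hνn, hasc⟩ := Nat.lastBetween.mem (hne n hn)
  refine ⟨hasc.le, ?_⟩
  rcases hνn.lt_or_eq with hlt | heq
  · exact le_of_forall_not_lt_succ hlt fun k hk hkn =>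
      Nat.lastBetween.not_of_lt (hne n hn) hk hkn.le
  · rw [heq] at hasc ⊢
    exact hasc.le

theorem mainge_lemma (a : ℕ → ℝ) (ha : ∀ n, 0 ≤ a n)
    (φ : ℕ → ℕ) (hφ : StrictMono φ) (hsub : ∀ j, a (φ j) < a (φ j + 1))
    (n₀ : ℕ)
    (hne : ∀ n, n₀ ≤ n → ∃ m, n₀ ≤ m ∧ m ≤ n ∧ a m < a (m + 1))
    (ν : ℕ → ℕ)
    (hν : ∀ n, ν n = sSup {m | n₀ ≤ m ∧ m ≤ n ∧ a m < a (m + 1)}) :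
    (∀ m n, n₀ ≤ m → m ≤ n → ν m ≤ ν n) ∧
      Filter.Tendsto ν Filter.atTop Filter.atTop ∧
      (∀ n, n₀ ≤ n → a (ν n) ≤ a (ν n + 1) ∧ a n ≤ a (ν n + 1)) :=
  mainge_lemma_general a φ hφ hsub n₀ hne ν hν
end

section
/- For p ∈ (1/2, 1) and every K ∈ ℕ, ((K+2)^{1−p} − 2^{1−p})/(1−p) ≥ ((3/4)^{1−p} − (1/2)^{1−p}) / ((1−p)(K+3)^{p−1}); consequently, if dₙ ≥ 0 satisfies the descent recursion with step sizes ηₙ = (n+1)^{−p}, then min_{1≤n≤K} θₙ − c = O(K^{p−1}). -/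
open Real Finset

/-- Bernoulli-type: for `x > 0`, `0 ≤ q ≤ 1`: `(x+1)^q ≤ x^q + q * x^(q-1)`. -/
private lemma rpow_succ_le (x : ℝ) (hx : 0 < x) {q : ℝ} (hq0 : 0 ≤ q) (hq1 : q ≤ 1) :
    (x + 1) ^ q ≤ x ^ q + q * x ^ (q - 1) := by
  have h1 : (x + 1) ^ q = x ^ q * (1 + 1/x) ^ q := by
    rw [← Real.mul_rpow hx.le (by positivity)]
    congr 1
    field_simp
  have h2 : (1 + 1/x) ^ q ≤ 1 + q * (1/x) := by
    have hvx : (0:ℝ) < 1/x := by positivity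
    have := rpow_one_add_le_one_add_mul_self (s := 1/x) (by linarith) hq0 hq1
    linarith
  have h3 : x ^ q * (1/x) = x ^ (q - 1) := by
    rw [Real.rpow_sub hx, Real.rpow_one, one_div, div_eq_mul_inv]
  calc (x + 1) ^ q = x ^ q * (1 + 1/x) ^ q := h1
    _ ≤ x ^ q * (1 + q * (1/x)) := by
        apply mul_le_mul_of_nonneg_left h2 (by positivity)
    _ = x ^ q + q * (x ^ q * (1/x)) := by ring
    _ = x ^ q + q * x ^ (q - 1) := by rw [h3]

/-- For `x > 0`, `0 ≤ t ≤ 1`: `t * (x+1)^(-t-1) ≤ x^(-t) - (x+1)^(-t)`. -/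
private lemma telescope_lower (x : ℝ) (hx : 0 < x) {t : ℝ} (ht0 : 0 ≤ t) (ht1 : t ≤ 1) :
    t * (x + 1) ^ (-t - 1) ≤ x ^ (-t) - (x + 1) ^ (-t) := by
  have hx1 : (0:ℝ) < x + 1 := by linarith
  have hv : (0:ℝ) < 1/(x+1) := by positivity
  have hkey : (x + 1) ^ (-t) ≤ x ^ (-t) * (1 - t * (1/(x+1))) := by
    have heq : (x + 1) ^ (-t) = x ^ (-t) * (x/(x+1)) ^ t := by
      rw [Real.div_rpow hx.le hx1.le, Real.rpow_neg hx.le,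
        Real.rpow_neg hx1.le]
      field_simp
    have hb : (x/(x+1) : ℝ) ^ t ≤ 1 - t * (1/(x+1)) := by
      have : (x/(x+1) : ℝ) = 1 + (-(1/(x+1))) := by field_simp; ring
      rw [this]
      have hvle : 1/(x+1) ≤ 1 := by rw [div_le_one hx1]; linarith
      have := rpow_one_add_le_one_add_mul_self
        (s := -(1/(x+1))) (by linarith) ht0 ht1
      linarith
    calc (x + 1) ^ (-t) = x ^ (-t) * (x/(x+1)) ^ t := heq
      _ ≤ x ^ (-t) * (1 - t * (1/(x+1))) := by
          apply mul_le_mul_of_nonneg_left hb (by positivity)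
  have hmono : (x + 1) ^ (-t) ≤ x ^ (-t) := by
    rw [Real.rpow_neg hx.le, Real.rpow_neg hx1.le]
    apply inv_anti₀ (by positivity)
    exact Real.rpow_le_rpow hx.le (by linarith) ht0
  have hstep : (x + 1) ^ (-t) * (t * (1/(x+1))) ≤ x ^ (-t) * (t * (1/(x+1))) := by
    apply mul_le_mul_of_nonneg_right hmono (by positivity)
  have hsplit : (x + 1) ^ (-t - 1) = (x + 1) ^ (-t) * (1/(x+1)) := by
    rw [show -t - 1 = -t + (-1) by ring, Real.rpow_add hx1, Real.rpow_neg_one, one_div]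
  nlinarith [hstep]

theorem diminishing_stepsize_rate (p : ℝ) (hp : 1 / 2 < p) (hp1 : p < 1) :
    (∀ K : ℕ, 1 ≤ K →
      (((K : ℝ) + 2) ^ (1 - p) - (2 : ℝ) ^ (1 - p)) / (1 - p)
        ≥ ((3 / 4 : ℝ) ^ (1 - p) - (1 / 2 : ℝ) ^ (1 - p))
            / ((1 - p) * ((K : ℝ) + 3) ^ (p - 1))) ∧
    (∀ (θ : ℕ → ℝ) (gz B c : ℝ), 0 < gz → 0 ≤ B →
      ∀ d : ℕ → ℝ, (∀ n, 0 ≤ d n) →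
      (∀ n, d (n + 1) ≤ d n + 2 * gz * (((n : ℝ) + 1) ^ (-p)) * (c - θ n)
          + B * (((n : ℝ) + 1) ^ (-p)) ^ 2) →
      ∃ C : ℝ, ∀ K : ℕ, (hK : 1 ≤ K) →
        (Finset.Icc 1 K).inf' ⟨1, by simp [hK]⟩ θ - c ≤ C * (K : ℝ) ^ (p - 1)) := by
  set s : ℝ := 1 - p with hs_def
  have hs0 : 0 < s := by simp [hs_def]; linarith
  have hs1 : s ≤ 1 := by simp [hs_def]; linarith
  -- core inequality for part 1
  have core : ∀ K : ℕ, 1 ≤ K →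
      ((3/4:ℝ) ^ s - (1/2:ℝ) ^ s) * ((K:ℝ) + 3) ^ s ≤ ((K:ℝ) + 2) ^ s - 2 ^ s := by
    intro K hK
    have hK1 : (1:ℝ) ≤ (K:ℝ) := by exact_mod_cast hK
    have h1 : (3/4:ℝ) ^ s * ((K:ℝ) + 3) ^ s ≤ ((K:ℝ) + 2) ^ s := by
      rw [← Real.mul_rpow (by norm_num) (by positivity)]
      exact Real.rpow_le_rpow (by positivity) (by linarith) hs0.le
    have h2 : (2:ℝ) ^ s ≤ (1/2:ℝ) ^ s * ((K:ℝ) + 3) ^ s := by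
      rw [← Real.mul_rpow (by norm_num) (by positivity)]
      exact Real.rpow_le_rpow (by norm_num) (by linarith) hs0.le
    nlinarith [h1, h2]
  have part1 : ∀ K : ℕ, 1 ≤ K →
      (((K : ℝ) + 2) ^ (1 - p) - (2 : ℝ) ^ (1 - p)) / (1 - p)
        ≥ ((3 / 4 : ℝ) ^ (1 - p) - (1 / 2 : ℝ) ^ (1 - p))
            / ((1 - p) * ((K : ℝ) + 3) ^ (p - 1)) := by
    intro K hK
    have hK3 : (0:ℝ) < (K:ℝ) + 3 := by positivity
    have hKs : (0:ℝ) < ((K:ℝ) + 3) ^ s := Real.rpow_pos_of_pos hK3 s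
    have hrw : ((K:ℝ) + 3) ^ (p - 1) = (((K:ℝ) + 3) ^ s)⁻¹ := by
      rw [show p - 1 = -s by simp [hs_def], Real.rpow_neg hK3.le]
    rw [ge_iff_le, hrw]
    have heq : (((3/4:ℝ)) ^ s - (1/2:ℝ) ^ s) / (s * (((K:ℝ) + 3) ^ s)⁻¹)
        = (((3/4:ℝ)) ^ s - (1/2:ℝ) ^ s) * ((K:ℝ) + 3) ^ s / s := by
      field_simp
    calc ((3/4:ℝ) ^ (1-p) - (1/2:ℝ) ^ (1-p)) / ((1-p) * (((K:ℝ) + 3) ^ s)⁻¹)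
        = (((3/4:ℝ)) ^ s - (1/2:ℝ) ^ s) * ((K:ℝ) + 3) ^ s / s := heq
      _ ≤ (((K:ℝ) + 2) ^ s - 2 ^ s) / s := by
          gcongr
          exact core K hK
      _ = (((K:ℝ) + 2) ^ (1-p) - (2:ℝ) ^ (1-p)) / (1 - p) := rfl
  refine ⟨part1, ?_⟩
  intro θ gz B c hgz hB d hd hrec
  set t : ℝ := 2 * p - 1 with ht_def
  have ht0 : 0 < t := by simp [ht_def]; linarith
  have ht1 : t ≤ 1 := by simp [ht_def]; linarith
  -- bound on sum of squares of stepsizes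
  have sumSq : ∀ K : ℕ, ∑ i ∈ range K, (((i:ℝ) + 2) ^ (-p)) ^ 2
      ≤ ((1:ℝ) ^ (-t) - ((K:ℝ) + 1) ^ (-t)) / t := by
    intro K
    induction K with
    | zero => simp
    | succ K ih =>
      rw [Finset.sum_range_succ]
      have hx : (0:ℝ) < (K:ℝ) + 1 := by positivity
      have htel := telescope_lower ((K:ℝ) + 1) hx ht0.le ht1
      have hsq : ((((K:ℝ) + 2)) ^ (-p)) ^ 2 = ((K:ℝ) + 2) ^ (-t - 1) := by
        rw [sq, ← Real.rpow_add (by positivity)]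
        congr 1
        simp only [ht_def]; ring
      have e2 : ((K:ℝ) + 1 + 1) = (K:ℝ) + 2 := by ring
      rw [e2] at htel
      have h1 : ((((K:ℝ) + 2)) ^ (-p)) ^ 2
          ≤ (((K:ℝ) + 1) ^ (-t) - ((K:ℝ) + 2) ^ (-t)) / t := by
        rw [hsq, le_div_iff₀ ht0]
        nlinarith [htel]
      push_cast
      have e3 : ((K:ℝ) + 1 + 1) = (K:ℝ) + 2 := by ring
      rw [e3]
      calc (∑ i ∈ range K, (((i:ℝ) + 2) ^ (-p)) ^ 2) + (((K:ℝ) + 2) ^ (-p)) ^ 2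
          ≤ ((1:ℝ) ^ (-t) - ((K:ℝ) + 1) ^ (-t)) / t
            + (((K:ℝ) + 1) ^ (-t) - ((K:ℝ) + 2) ^ (-t)) / t := add_le_add ih h1
        _ = ((1:ℝ) ^ (-t) - ((K:ℝ) + 2) ^ (-t)) / t := by ring
  have sumSq' : ∀ K : ℕ, ∑ i ∈ range K, (((i:ℝ) + 2) ^ (-p)) ^ 2 ≤ 1 / t := by
    intro K
    refine (sumSq K).trans ?_
    rw [Real.one_rpow]
    have hnn : (0:ℝ) ≤ ((K:ℝ) + 1) ^ (-t) := Real.rpow_nonneg (by positivity) _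
    gcongr
    linarith
  -- lower bound on sum of stepsizes
  have sumS : ∀ K : ℕ, (((K:ℝ) + 2) ^ s - 2 ^ s) / s ≤ ∑ i ∈ range K, ((i:ℝ) + 2) ^ (-p) := by
    intro K
    induction K with
    | zero => simp
    | succ K ih =>
      rw [Finset.sum_range_succ]
      have hx : (0:ℝ) < (K:ℝ) + 2 := by positivity
      have hstep := rpow_succ_le ((K:ℝ) + 2) hx hs0.le hs1
      have hse : ((K:ℝ) + 2) ^ (s - 1) = ((K:ℝ) + 2) ^ (-p) := by
        congr 1; simp only [hs_def]; ring
      have h1 : (((K:ℝ) + 3) ^ s - ((K:ℝ) + 2) ^ s) / s ≤ ((K:ℝ) + 2) ^ (-p) := by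
        rw [div_le_iff₀ hs0]
        rw [hse] at hstep
        have e0 : ((K:ℝ) + 2 + 1) = (K:ℝ) + 3 := by ring
        rw [e0] at hstep
        nlinarith [hstep]
      push_cast
      have e1 : ((K:ℝ) + 1 + 2) = (K:ℝ) + 3 := by ring
      rw [e1]
      calc (((K:ℝ) + 3) ^ s - 2 ^ s) / s
          = (((K:ℝ) + 2) ^ s - 2 ^ s) / s + (((K:ℝ) + 3) ^ s - ((K:ℝ) + 2) ^ s) / s := by ring
        _ ≤ (∑ i ∈ range K, ((i:ℝ) + 2) ^ (-p)) + ((K:ℝ) + 2) ^ (-p) := add_le_add ih h1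
  -- summed recursion
  have hsum : ∀ K : ℕ, 2 * gz * ∑ i ∈ range K, ((i:ℝ) + 2) ^ (-p) * (θ (i + 1) - c)
      ≤ d 1 - d (K + 1) + B * ∑ i ∈ range K, (((i:ℝ) + 2) ^ (-p)) ^ 2 := by
    intro K
    induction K with
    | zero => simp
    | succ K ih =>
      have h := hrec (K + 1)
      push_cast at h
      rw [Finset.sum_range_succ, Finset.sum_range_succ]
      have e2 : ((K:ℝ) + 1 + 1) = (K:ℝ) + 2 := by ring
      rw [e2] at h
      nlinarith [ih, h]
  -- assemble
  set c₁ : ℝ := ((3/4:ℝ) ^ s - (1/2:ℝ) ^ s) / s with hc1_def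
  have hc1 : 0 < c₁ := by
    apply div_pos _ hs0
    have := Real.rpow_lt_rpow (x := (1/2:ℝ)) (by norm_num) (by norm_num : (1/2:ℝ) < 3/4) hs0
    linarith
  set D : ℝ := (d 1 + B * (1 / t)) / (2 * gz) with hD_def
  have hD : 0 ≤ D := by
    apply div_nonneg _ (by linarith)
    have := hd 1
    have : 0 ≤ B * (1/t) := mul_nonneg hB (by positivity)
    nlinarith [hd 1]
  refine ⟨D / c₁, ?_⟩
  intro K hK
  have hK1 : (1:ℝ) ≤ (K:ℝ) := by exact_mod_cast hK
  set m : ℝ := (Finset.Icc 1 K).inf' ⟨1, by simp [hK]⟩ θ with hm_def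
  set S : ℝ := ∑ i ∈ range K, ((i:ℝ) + 2) ^ (-p) with hS_def
  have hSlb : c₁ * (K:ℝ) ^ s ≤ S := by
    have h1 := sumS K
    have h2 := core K hK
    have h3 : ((K:ℝ)) ^ s ≤ ((K:ℝ) + 3) ^ s :=
      Real.rpow_le_rpow (by positivity) (by linarith) hs0.le
    have h4 : 0 ≤ ((3/4:ℝ) ^ s - (1/2:ℝ) ^ s) := by
      have := Real.rpow_lt_rpow (x := (1/2:ℝ)) (by norm_num) (by norm_num : (1/2:ℝ) < 3/4) hs0
      linarith
    have : ((3/4:ℝ) ^ s - (1/2:ℝ) ^ s) * ((K:ℝ)) ^ s ≤ (((K:ℝ) + 2) ^ s - 2 ^ s) :=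
      le_trans (mul_le_mul_of_nonneg_left h3 h4) h2
    calc c₁ * (K:ℝ) ^ s = ((3/4:ℝ) ^ s - (1/2:ℝ) ^ s) * ((K:ℝ)) ^ s / s := by
          rw [hc1_def]; ring
      _ ≤ (((K:ℝ) + 2) ^ s - 2 ^ s) / s := by gcongr
      _ ≤ S := h1
  have hKs : (0:ℝ) < (K:ℝ) ^ s := Real.rpow_pos_of_pos (by linarith) s
  have hSpos : 0 < S := lt_of_lt_of_le (by positivity) hSlb
  -- min bound
  have hmle : ∀ i ∈ range K, m ≤ θ (i + 1) := by
    intro i hi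
    apply Finset.inf'_le
    simp only [Finset.mem_Icc]
    exact ⟨Nat.le_add_left 1 i, Nat.succ_le_of_lt (Finset.mem_range.mp hi)⟩
  have hlow : (m - c) * S ≤ ∑ i ∈ range K, ((i:ℝ) + 2) ^ (-p) * (θ (i + 1) - c) := by
    rw [hS_def, Finset.mul_sum]
    apply Finset.sum_le_sum
    intro i hi
    have hη : (0:ℝ) ≤ ((i:ℝ) + 2) ^ (-p) := Real.rpow_nonneg (by positivity) _
    rw [mul_comm (m - c)]
    exact mul_le_mul_of_nonneg_left (sub_le_sub_right (hmle i hi) c) hη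
  have hmain : (m - c) * S ≤ D := by
    have h1 := hsum K
    have h2 := sumSq' K
    have h3 := hd (K + 1)
    have h4 : 2 * gz * ((m - c) * S) ≤ 2 * gz * ∑ i ∈ range K, ((i:ℝ) + 2) ^ (-p) * (θ (i + 1) - c) :=
      mul_le_mul_of_nonneg_left hlow (by linarith)
    have h5 : B * ∑ i ∈ range K, (((i:ℝ) + 2) ^ (-p)) ^ 2 ≤ B * (1 / t) :=
      mul_le_mul_of_nonneg_left h2 hB
    have h6 : 2 * gz * ((m - c) * S) ≤ d 1 + B * (1 / t) := by linarith
    rw [hD_def, le_div_iff₀ (by linarith : (0:ℝ) < 2 * gz)]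
    linarith
  have hfin : m - c ≤ D / (c₁ * (K:ℝ) ^ s) := by
    have h1 : m - c ≤ D / S := (le_div_iff₀ hSpos).mpr hmain
    refine h1.trans ?_
    exact div_le_div_of_nonneg_left hD (by positivity) hSlb
  have hrw : D / c₁ * (K:ℝ) ^ (p - 1) = D / (c₁ * (K:ℝ) ^ s) := by
    rw [show p - 1 = -s by simp [hs_def], Real.rpow_neg (by positivity : (0:ℝ) ≤ (K:ℝ))]
    rw [← div_eq_mul_inv, div_div]
  rw [hm_def] at hfin
  linarith [hfin, hrw.ge]
end

section
/- Let f : ℝ^k → ℝ be σ-strongly convex, g concave, z ∈ ℝ^k with g(z) > 0 and f(z) ≥ 0, and x ∈ ℝ^k with g(x) > 0, θ := f(x)/g(x) ≥ 0. Suppose ⟨x − z, f′(x) + θ h′(x)⟩ ≤ 0 for some f′(x) ∈ ∂f(x) and h′(x) ∈ ∂(−g)(x). Then θ ≤ f(z)/g(z) and, moreover, σ‖x − z‖ ≤ ‖f′(z)‖ + (f(z)/g(z))‖h′(z)‖ for any f′(z) ∈ ∂f(z) and h′(z) ∈ ∂(−g)(z). -/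
/-!
With `θ = f x / g x`, the vector `fx + θ • hx` is a subgradient of `φ = f - θ • g` at `x`, where
`φ` vanishes; since it does not point towards `z`, `0 = φ x ≤ φ z = f z - θ * g z`. For the distance
bound, subgradients of the `σ`-strongly convex `f` are `σ`-strongly monotone and those of `-g` are
monotone, so `σ ‖x - z‖² ≤ ⟪fx + θ • hx - (fz + θ • hz), x - z⟫ ≤ ⟪-(fz + θ • hz), x - z⟫`, and
Cauchy–Schwarz together with `θ ≤ f z / g z` concludes.
-/

open scoped RealInnerProductSpace

open Filter Topology

variable {E : Type*} [NormedAddCommGroup E] [InnerProductSpace ℝ E]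

def HasSubgradientAt (f : E → ℝ) (v x : E) : Prop :=
  ∀ w, ⟪v, w - x⟫ ≤ f w - f x

namespace HasSubgradientAt

variable {f g : E → ℝ} {u v x y : E}

theorem add (hf : HasSubgradientAt f v x) (hg : HasSubgradientAt g u x) :
    HasSubgradientAt (f + g) (v + u) x := fun w => by
  simp only [Pi.add_apply, inner_add_left]
  linarith [hf w, hg w]

theorem const_smul {c : ℝ} (hc : 0 ≤ c) (hf : HasSubgradientAt f v x) :
    HasSubgradientAt (c • f) (c • v) x := fun w => by
  rw [real_inner_smul_left, Pi.smul_apply, Pi.smul_apply, smul_eq_mul, smul_eq_mul, ← mul_sub]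
  exact mul_le_mul_of_nonneg_left (hf w) hc

theorem le_of_inner_nonpos (hv : HasSubgradientAt f v x) (h : ⟪v, x - y⟫ ≤ 0) : f x ≤ f y := by
  have := hv y
  rw [← neg_sub, inner_neg_right] at this
  linarith

theorem inner_sub_nonneg (hv : HasSubgradientAt f v x) (hu : HasSubgradientAt f u y) :
    0 ≤ ⟪v - u, x - y⟫ := by
  have hxy := hv y
  have hyx := hu x
  rw [← neg_sub, inner_neg_right] at hxy
  rw [inner_sub_left]
  linarith

end HasSubgradientAt

namespace StrongConvexOn

variable {f : E → ℝ} {m : ℝ} {u v x y : E}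

/-- Along the segment from `x` to `w`, the subgradient inequality at parameter `t ∈ (0, 1]` gives
`⟪v, w - x⟫ ≤ f w - f x - m / 2 * (1 - t) * ‖w - x‖ ^ 2`; let `t → 0⁺`. -/
theorem inner_le_of_hasSubgradientAt (hf : StrongConvexOn Set.univ m f)
    (hv : HasSubgradientAt f v x) (w : E) :
    ⟪v, w - x⟫ ≤ f w - f x - m / 2 * ‖w - x‖ ^ 2 := by
  have hsegment : ∀ t ∈ Set.Ioc (0 : ℝ) 1,
      ⟪v, w - x⟫ ≤ f w - f x - m / 2 * (1 - t) * ‖w - x‖ ^ 2 := by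
    rintro t ⟨ht0, ht1⟩
    have hconv : f (t • w + (1 - t) • x) ≤
        t * f w + (1 - t) * f x - t * (1 - t) * (m / 2 * ‖w - x‖ ^ 2) :=
      hf.2 (Set.mem_univ w) (Set.mem_univ x) ht0.le (sub_nonneg.2 ht1) (add_sub_cancel t 1)
    have hsub := hv (t • w + (1 - t) • x)
    rw [show t • w + (1 - t) • x - x = t • (w - x) by module, real_inner_smul_right] at hsub
    have hscaled : t * ⟪v, w - x⟫ ≤ t * (f w - f x - m / 2 * (1 - t) * ‖w - x‖ ^ 2) := by
      linarith
    exact le_of_mul_le_mul_left hscaled ht0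
  have hlim : Tendsto (fun t : ℝ => f w - f x - m / 2 * (1 - t) * ‖w - x‖ ^ 2) (𝓝[>] 0)
      (𝓝 (f w - f x - m / 2 * ‖w - x‖ ^ 2)) := by
    refine tendsto_nhdsWithin_of_tendsto_nhds ?_
    have hcont : Continuous fun t : ℝ => f w - f x - m / 2 * (1 - t) * ‖w - x‖ ^ 2 := by fun_prop
    simpa using hcont.tendsto 0
  refine ge_of_tendsto hlim ?_
  filter_upwards [Ioc_mem_nhdsGT zero_lt_one] with t ht using hsegment t ht

theorem mul_norm_sub_sq_le_inner_sub (hf : StrongConvexOn Set.univ m f)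
    (hv : HasSubgradientAt f v x) (hu : HasSubgradientAt f u y) :
    m * ‖x - y‖ ^ 2 ≤ ⟪v - u, x - y⟫ := by
  have hxy := hf.inner_le_of_hasSubgradientAt hv y
  have hyx := hf.inner_le_of_hasSubgradientAt hu x
  rw [← neg_sub, inner_neg_right, norm_neg] at hxy
  rw [inner_sub_left]
  linarith

end StrongConvexOn

theorem mul_norm_le_norm_of_mul_norm_sq_le_inner {m : ℝ} {u y : E}
    (h : m * ‖y‖ ^ 2 ≤ ⟪u, y⟫) : m * ‖y‖ ≤ ‖u‖ := by
  rcases (norm_nonneg y).eq_or_lt with hy | hy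
  · rw [← hy, mul_zero]
    exact norm_nonneg u
  · refine le_of_mul_le_mul_right ?_ hy
    calc m * ‖y‖ * ‖y‖ = m * ‖y‖ ^ 2 := by ring
      _ ≤ ⟪u, y⟫ := h
      _ ≤ ‖u‖ * ‖y‖ := real_inner_le_norm u y

theorem strongly_convex_case_bounds_general {k : ℕ}
    (f g : EuclideanSpace ℝ (Fin k) → ℝ) (σ : ℝ)
    (hf : ∀ x y : EuclideanSpace ℝ (Fin k), ∀ α : ℝ, α ∈ Set.Icc (0:ℝ) 1 →
      f (α • x + (1 - α) • y) ≤ α * f x + (1 - α) * f y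
        - σ / 2 * α * (1 - α) * ‖x - y‖ ^ 2)
    (z x : EuclideanSpace ℝ (Fin k))
    (hgz : 0 < g z) (hgx : 0 < g x)
    (θ : ℝ) (hθ : θ = f x / g x) (hθ0 : 0 ≤ θ)
    (fx hx : EuclideanSpace ℝ (Fin k))
    (hfx : ∀ w, ⟪fx, w - x⟫ ≤ f w - f x)
    (hhx : ∀ w, ⟪hx, w - x⟫ ≤ -g w + g x)
    (hkey : ⟪x - z, fx + θ • hx⟫ ≤ 0) :
    θ ≤ f z / g z ∧
      ∀ fz hz : EuclideanSpace ℝ (Fin k),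
        (∀ w, ⟪fz, w - z⟫ ≤ f w - f z) →
        (∀ w, ⟪hz, w - z⟫ ≤ -g w + g z) →
        σ * ‖x - z‖ ≤ ‖fz‖ + (f z / g z) * ‖hz‖ := by
  have hσf : StrongConvexOn Set.univ σ f := ⟨convex_univ, fun x _ y _ a _ ha _ hab => by
    obtain rfl := eq_sub_of_add_eq' hab
    exact (hf x y a ⟨ha, by linarith⟩).trans_eq (by simp only [smul_eq_mul]; ring)⟩
  have neg_g {h p : EuclideanSpace ℝ (Fin k)} (hh : ∀ w, ⟪h, w - p⟫ ≤ -g w + g p) :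
      HasSubgradientAt (-g) h p := fun w => (hh w).trans_eq (by simp only [Pi.neg_apply]; ring)
  have hfθ : f x = θ * g x := by rw [hθ, div_mul_cancel₀ _ hgx.ne']
  have hθz : θ ≤ f z / g z := by
    have hφ := (HasSubgradientAt.add hfx ((neg_g hhx).const_smul hθ0)).le_of_inner_nonpos
      (y := z) (by rwa [real_inner_comm])
    simp only [Pi.add_apply, Pi.smul_apply, Pi.neg_apply, smul_eq_mul] at hφ
    rw [le_div_iff₀ hgz]
    linarith
  refine ⟨hθz, fun fz hz hfz hhz => ?_⟩
  have hf_mono := hσf.mul_norm_sub_sq_le_inner_sub hfx hfz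
  have hg_mono := (neg_g hhx).inner_sub_nonneg (neg_g hhz)
  have hmono : σ * ‖x - z‖ ^ 2 ≤ ⟪-(fz + θ • hz), x - z⟫ := by
    rw [real_inner_comm] at hkey
    simp only [inner_sub_left, inner_neg_left, inner_add_left, real_inner_smul_left]
      at hkey hf_mono hg_mono ⊢
    linarith [mul_nonneg hθ0 hg_mono]
  calc σ * ‖x - z‖ ≤ ‖-(fz + θ • hz)‖ := mul_norm_le_norm_of_mul_norm_sq_le_inner hmono
    _ ≤ ‖fz‖ + θ * ‖hz‖ := by
      rw [norm_neg]
      exact (norm_add_le _ _).trans_eq (by rw [norm_smul, Real.norm_of_nonneg hθ0])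
    _ ≤ ‖fz‖ + f z / g z * ‖hz‖ := by gcongr

theorem strongly_convex_case_bounds {k : ℕ}
    (f g : EuclideanSpace ℝ (Fin k) → ℝ) (σ : ℝ) (hσ : 0 < σ)
    (hf : ∀ x y : EuclideanSpace ℝ (Fin k), ∀ α : ℝ, α ∈ Set.Icc (0:ℝ) 1 →
      f (α • x + (1 - α) • y) ≤ α * f x + (1 - α) * f y
        - σ / 2 * α * (1 - α) * ‖x - y‖ ^ 2)
    (hg : ConcaveOn ℝ Set.univ g)
    (z x : EuclideanSpace ℝ (Fin k))
    (hgz : 0 < g z) (hfz : 0 ≤ f z) (hgx : 0 < g x)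
    (θ : ℝ) (hθ : θ = f x / g x) (hθ0 : 0 ≤ θ)
    (fx hx : EuclideanSpace ℝ (Fin k))
    (hfx : ∀ w, ⟪fx, w - x⟫ ≤ f w - f x)
    (hhx : ∀ w, ⟪hx, w - x⟫ ≤ -g w + g x)
    (hkey : ⟪x - z, fx + θ • hx⟫ ≤ 0) :
    θ ≤ f z / g z ∧
      ∀ fz hz : EuclideanSpace ℝ (Fin k),
        (∀ w, ⟪fz, w - z⟫ ≤ f w - f z) →
        (∀ w, ⟪hz, w - z⟫ ≤ -g w + g z) →
        σ * ‖x - z‖ ≤ ‖fz‖ + (f z / g z) * ‖hz‖ :=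
  strongly_convex_case_bounds_general f g σ hf z x hgz hgx θ hθ hθ0 fx hx hfx hhx hkey
end

section
/- Let f : ℝ^k → ℝ be σ-strongly convex (σ > 0) with f(x) ≥ 0 for all x in a convex set C, and let g : ℝ^k → ℝ be concave with 0 < g(x) ≤ M on C for some M > 0. Then the ratio f/g is (σ/M)-strongly quasi-convex on C: for all x, y ∈ C and α ∈ [0,1], (f/g)(αx + (1−α)y) ≤ max{(f/g)(x), (f/g)(y)} − α(1−α)(σ/(2M))‖x − y‖². -/
theorem ratio_strongly_quasiconvex {k : ℕ}
    (f g : EuclideanSpace ℝ (Fin k) → ℝ) (σ M : ℝ) (hσ : 0 < σ) (hM : 0 < M)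
    (C : Set (EuclideanSpace ℝ (Fin k))) (hC : Convex ℝ C)
    (hf : ∀ x y : EuclideanSpace ℝ (Fin k), ∀ α : ℝ, α ∈ Set.Icc (0:ℝ) 1 →
      f (α • x + (1 - α) • y) ≤ α * f x + (1 - α) * f y
        - σ / 2 * α * (1 - α) * ‖x - y‖ ^ 2)
    (hfC : ∀ x ∈ C, 0 ≤ f x)
    (hg : ∀ x y : EuclideanSpace ℝ (Fin k), ∀ α : ℝ, α ∈ Set.Icc (0:ℝ) 1 →
      α * g x + (1 - α) * g y ≤ g (α • x + (1 - α) • y))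
    (hgC : ∀ x ∈ C, 0 < g x ∧ g x ≤ M) :
    ∀ x ∈ C, ∀ y ∈ C, ∀ α : ℝ, α ∈ Set.Icc (0:ℝ) 1 →
      f (α • x + (1 - α) • y) / g (α • x + (1 - α) • y)
        ≤ max (f x / g x) (f y / g y) - α * (1 - α) * (σ / (2 * M)) * ‖x - y‖ ^ 2 := by
  intro x hx y hy α hα
  obtain ⟨hα0, hα1⟩ := hα
  set z := α • x + (1 - α) • y with hzdef
  have hzC : z ∈ C := hC hx hy hα0 (by linarith) (by ring)
  obtain ⟨hgz, hgzM⟩ := hgC z hzC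
  obtain ⟨hgx, hgxM⟩ := hgC x hx
  obtain ⟨hgy, hgyM⟩ := hgC y hy
  set h := max (f x / g x) (f y / g y) with hhdef
  have hh0 : 0 ≤ h := le_trans (div_nonneg (hfC x hx) hgx.le) (le_max_left _ _)
  have hfx : f x ≤ h * g x := by
    have := (div_le_iff₀ hgx).mp (le_max_left (f x / g x) (f y / g y))
    linarith
  have hfy : f y ≤ h * g y := by
    have := (div_le_iff₀ hgy).mp (le_max_right (f x / g x) (f y / g y))
    linarith
  have hfz := hf x y α ⟨hα0, hα1⟩
  have hgz' := hg x y α ⟨hα0, hα1⟩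
  have hα' : 0 ≤ α * (1 - α) := mul_nonneg hα0 (by linarith)
  have hn : (0:ℝ) ≤ ‖x - y‖ ^ 2 := sq_nonneg _
  rw [div_le_iff₀ hgz]
  have key : f z ≤ h * g z - σ / 2 * α * (1 - α) * ‖x - y‖ ^ 2 := by
    have h1 : α * f x + (1 - α) * f y ≤ h * (α * g x + (1 - α) * g y) := by
      nlinarith
    nlinarith
  have hc : α * (1 - α) * (σ / (2 * M)) * ‖x - y‖ ^ 2 * g z
      ≤ σ / 2 * α * (1 - α) * ‖x - y‖ ^ 2 := by
    have e : σ / 2 = M * (σ / (2 * M)) := by field_simp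
    have hcpos : 0 ≤ σ / (2 * M) := by positivity
    rw [e]
    nlinarith [mul_nonneg (mul_nonneg hα' hn) hcpos, mul_nonneg hα' hn]
  nlinarith
end
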